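/- arXiv:2309.01698 — 3 statements merged into one kernel-verified Lean document; each statement's English description precedes it below -/
import Mathlib

section
/- Let p, q be probability distributions on a finite product space Ω₁ × Ω₂, with marginals p⁽¹⁾, q⁽¹⁾ on Ω₁. For α ∈ (0,1), the Rényi divergence satisfies the chain rule D_α(p,q) = D_α(p⁽¹⁾,q⁽¹⁾) + D_α(p,q | r), where r(ω₁) = p⁽¹⁾(ω₁)^α q⁽¹⁾(ω₁)^{1−α} exp(−(α−1)D_α(p⁽¹⁾,q⁽¹⁾)) is a probability distribution on Ω₁, and D_α(p,q|r) = (1/(α−1)) log E_{ω₁∼r}[Σ_{ω₂} p(ω₂|ω₁)^α q(ω₂|ω₁)^{1−α}]. -/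
open Real

/-- chain rule for Rényi divergence on a finite product space. -/
theorem stmt_7 {Ω₁ Ω₂ : Type*} [Fintype Ω₁] [Fintype Ω₂]
    (α : ℝ) (hα0 : 0 < α) (hα1 : α < 1)
    (p q : Ω₁ × Ω₂ → ℝ)
    (hp0 : ∀ ω, 0 < p ω) (hp1 : ∑ ω, p ω = 1)
    (hq0 : ∀ ω, 0 < q ω) (hq1 : ∑ ω, q ω = 1)
    (p₁ q₁ : Ω₁ → ℝ)
    (hp₁ : ∀ ω₁, p₁ ω₁ = ∑ ω₂, p (ω₁, ω₂))
    (hq₁ : ∀ ω₁, q₁ ω₁ = ∑ ω₂, q (ω₁, ω₂))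
    (D₁ : ℝ)
    (hD₁ : D₁ = (1 / (α - 1)) * Real.log (∑ ω₁, p₁ ω₁ ^ α * q₁ ω₁ ^ (1 - α)))
    (r : Ω₁ → ℝ)
    (hr : ∀ ω₁, r ω₁ = p₁ ω₁ ^ α * q₁ ω₁ ^ (1 - α) * Real.exp (-(α - 1) * D₁)) :
    (∑ ω₁, r ω₁ = 1) ∧
    (1 / (α - 1)) * Real.log (∑ ω, p ω ^ α * q ω ^ (1 - α))
      = D₁ + (1 / (α - 1)) * Real.log
          (∑ ω₁, r ω₁ *
            ∑ ω₂, (p (ω₁, ω₂) / p₁ ω₁) ^ α * (q (ω₁, ω₂) / q₁ ω₁) ^ (1 - α)) := by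
  have hα1' : α - 1 ≠ 0 := by linarith
  -- nonemptiness
  have hNE : Nonempty (Ω₁ × Ω₂) := by
    by_contra h
    rw [not_nonempty_iff] at h
    simp [Finset.sum_empty] at hp1
  have hNE2 : Nonempty Ω₂ := ⟨(Classical.arbitrary (Ω₁ × Ω₂)).2⟩
  have hp₁pos : ∀ ω₁, 0 < p₁ ω₁ := fun ω₁ => by
    rw [hp₁]; exact Finset.sum_pos (fun i _ => hp0 _) (by simp)
  have hq₁pos : ∀ ω₁, 0 < q₁ ω₁ := fun ω₁ => by
    rw [hq₁]; exact Finset.sum_pos (fun i _ => hq0 _) (by simp)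
  set S : ℝ := ∑ ω₁, p₁ ω₁ ^ α * q₁ ω₁ ^ (1 - α) with hS
  have hNE1 : Nonempty Ω₁ := ⟨(Classical.arbitrary (Ω₁ × Ω₂)).1⟩
  have hSpos : 0 < S := Finset.sum_pos (fun i _ =>
    mul_pos (rpow_pos_of_pos (hp₁pos i) _) (rpow_pos_of_pos (hq₁pos i) _)) (by simp)
  have hexp : Real.exp (-(α - 1) * D₁) = S⁻¹ := by
    rw [hD₁]
    have : -(α - 1) * ((1 / (α - 1)) * Real.log S) = -Real.log S := by
      field_simp
    rw [this, Real.exp_neg, Real.exp_log hSpos]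
  have hrsum : ∑ ω₁, r ω₁ = 1 := by
    simp only [hr, hexp, ← Finset.sum_mul]
    rw [← hS, mul_inv_cancel₀ hSpos.ne']
  refine ⟨hrsum, ?_⟩
  set T : ℝ := ∑ ω, p ω ^ α * q ω ^ (1 - α) with hT
  have hTpos : 0 < T := Finset.sum_pos (fun i _ =>
    mul_pos (rpow_pos_of_pos (hp0 i) _) (rpow_pos_of_pos (hq0 i) _)) (by simp)
  have key : ∀ ω₁, p₁ ω₁ ^ α * q₁ ω₁ ^ (1 - α) *
      (∑ ω₂, (p (ω₁, ω₂) / p₁ ω₁) ^ α * (q (ω₁, ω₂) / q₁ ω₁) ^ (1 - α))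
      = ∑ ω₂, p (ω₁, ω₂) ^ α * q (ω₁, ω₂) ^ (1 - α) := by
    intro ω₁
    rw [Finset.mul_sum]
    refine Finset.sum_congr rfl fun ω₂ _ => ?_
    rw [Real.div_rpow (hp0 _).le (hp₁pos ω₁).le,
        Real.div_rpow (hq0 _).le (hq₁pos ω₁).le]
    have hA := (Real.rpow_pos_of_pos (hp₁pos ω₁) α).ne'
    have hB := (Real.rpow_pos_of_pos (hq₁pos ω₁) (1 - α)).ne'
    field_simp
    try ring
  have hinner : (∑ ω₁, r ω₁ *
      ∑ ω₂, (p (ω₁, ω₂) / p₁ ω₁) ^ α * (q (ω₁, ω₂) / q₁ ω₁) ^ (1 - α)) = T / S := by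
    rw [hT, Fintype.sum_prod_type]
    rw [eq_div_iff hSpos.ne', Finset.sum_mul]
    refine Finset.sum_congr rfl fun ω₁ _ => ?_
    rw [hr, hexp, ← key ω₁]
    field_simp
    try ring
  rw [hinner, Real.log_div hTpos.ne' hSpos.ne', hD₁]
  ring
end

section
/- Let Ω be a finite set and let P₀, P₁ be nonempty convex compact sets of probability distributions on Ω. Then min over functions φ: Ω → [0,1] of sup_{p₀∈P₀, p₁∈P₁} (E_{ω∼p₀}[1−φ(ω)] + E_{ω∼p₁}[φ(ω)]) equals 1 − inf_{p₀∈P₀, p₁∈P₁} ‖p₀−p₁‖_TV. -/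
open Finset Set

lemma aux_payoff_eq {Ω : Type*} [Fintype Ω] (φ p₀ p₁ : Ω → ℝ) (h₀ : ∑ ω, p₀ ω = 1) :
    (∑ ω, p₀ ω * (1 - φ ω)) + ∑ ω, p₁ ω * φ ω = 1 + ∑ ω, (p₁ ω - p₀ ω) * φ ω := by
  simp only [mul_sub, mul_one, sub_mul, Finset.sum_sub_distrib, h₀]
  ring

lemma aux_lower {Ω : Type*} [Fintype Ω] (φ p₀ p₁ : Ω → ℝ)
    (hφ : ∀ ω, φ ω ∈ Set.Icc (0:ℝ) 1)
    (h₀ : ∑ ω, p₀ ω = 1) (h₁ : ∑ ω, p₁ ω = 1) :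
    1 - (1/2) * ∑ ω, |p₀ ω - p₁ ω| ≤ (∑ ω, p₀ ω * (1 - φ ω)) + ∑ ω, p₁ ω * φ ω := by
  rw [aux_payoff_eq φ p₀ p₁ h₀]
  have hdsum : ∑ ω, (p₁ ω - p₀ ω) = 0 := by
    rw [Finset.sum_sub_distrib, h₀, h₁]; ring
  have hpt : ∀ ω ∈ Finset.univ, ((p₁ ω - p₀ ω) - |p₀ ω - p₁ ω|) / 2 ≤ (p₁ ω - p₀ ω) * φ ω := by
    intro ω _
    obtain ⟨h0, h1⟩ := hφ ω
    rcases le_or_gt 0 (p₁ ω - p₀ ω) with h | h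
    · rw [abs_sub_comm, abs_of_nonneg h]
      simpa using mul_nonneg h h0
    · rw [abs_of_pos (by linarith : 0 < p₀ ω - p₁ ω)]
      nlinarith
  have h2 := Finset.sum_le_sum hpt
  rw [← Finset.sum_div, Finset.sum_sub_distrib, hdsum] at h2
  linarith

open Finset Set

lemma aux_repr {Ω : Type*} [Fintype Ω] [DecidableEq Ω] (f : (Ω → ℝ) →L[ℝ] ℝ) (d : Ω → ℝ) :
    f d = ∑ ω, d ω * f (Pi.single ω 1) := by
  have hd : d = ∑ ω, d ω • (Pi.single ω 1 : Ω → ℝ) := by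
    funext j
    simp [Finset.sum_apply, Pi.single_apply]
  conv_lhs => rw [hd]
  rw [map_sum]
  simp [smul_eq_mul]

lemma aux_single_abs {Ω : Type*} [Fintype Ω] [DecidableEq Ω] (ω : Ω) (a : ℝ) :
    ∑ ω', |Pi.single ω a ω'| = |a| := by
  simp [Pi.single_apply, apply_ite (|·|)]

lemma aux_sep {Ω : Type*} [Fintype Ω] [DecidableEq Ω] (D : Set (Ω → ℝ)) (hDconv : Convex ℝ D)
    (r : ℝ) (hr : 0 < r) (hD : ∀ d ∈ D, r ≤ ∑ ω, |d ω|) :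
    ∃ g : Ω → ℝ, (∀ ω, |g ω| ≤ 1) ∧ ∀ d ∈ D, r ≤ ∑ ω, d ω * g ω := by
  set B : Set (Ω → ℝ) := {x | ∑ ω, |x ω| < r} with hB
  have hBopen : IsOpen B := by
    have : Continuous fun x : Ω → ℝ => ∑ ω, |x ω| := by
      apply continuous_finset_sum
      intro i _
      exact (continuous_apply i).abs
    exact this.isOpen_preimage _ isOpen_Iio
  have hBconv : Convex ℝ B := by
    intro x hx y hy a b ha hb hab
    simp only [hB, Set.mem_setOf_eq] at *
    have step : ∑ ω, |(a • x + b • y) ω| ≤ a * ∑ ω, |x ω| + b * ∑ ω, |y ω| := by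
      calc ∑ ω, |(a • x + b • y) ω| ≤ ∑ ω, (a * |x ω| + b * |y ω|) := by
            apply Finset.sum_le_sum
            intro ω _
            simp only [Pi.add_apply, Pi.smul_apply, smul_eq_mul]
            calc |a * x ω + b * y ω| ≤ |a * x ω| + |b * y ω| := abs_add_le _ _
              _ = a * |x ω| + b * |y ω| := by
                  rw [abs_mul, abs_mul, abs_of_nonneg ha, abs_of_nonneg hb]
        _ = a * ∑ ω, |x ω| + b * ∑ ω, |y ω| := by
            rw [Finset.sum_add_distrib, ← Finset.mul_sum, ← Finset.mul_sum]
    rcases eq_or_lt_of_le ha with heq | hapos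
    · have hb1 : b = 1 := by linarith
      have : a * ∑ ω, |x ω| + b * ∑ ω, |y ω| < r := by
        rw [hb1, ← heq]; simpa using hy
      linarith
    · have h1 : a * ∑ ω, |x ω| < a * r := by
        exact mul_lt_mul_of_pos_left hx hapos
      have h2 : b * ∑ ω, |y ω| ≤ b * r := mul_le_mul_of_nonneg_left (le_of_lt hy) hb
      have : a * ∑ ω, |x ω| + b * ∑ ω, |y ω| < r := by nlinarith
      linarith
  have hdisj : Disjoint B D := by
    rw [Set.disjoint_left]
    intro x hxB hxD
    exact absurd (hD x hxD) (not_le.2 hxB)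
  obtain ⟨f, u, hfB, hfD⟩ := geometric_hahn_banach_open hBconv hBopen hDconv hdisj
  have hu : 0 < u := by
    have h0B : (0 : Ω → ℝ) ∈ B := by simp [hB, hr]
    simpa using hfB 0 h0B
  have hbound : ∀ ω, r * |f (Pi.single ω 1)| ≤ u := by
    intro ω
    by_contra hcon
    push_neg at hcon
    set c := f (Pi.single ω 1) with hc
    have hcpos : 0 < |c| := by nlinarith [abs_nonneg c]
    set t := (u + r * |c|) / (2 * |c|) with ht
    have htpos : 0 < t := by positivity
    have htlt : t < r := by
      rw [ht, div_lt_iff₀ (by positivity)]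
      nlinarith
    have htc : u < t * |c| := by
      rw [ht, div_mul_eq_mul_div, lt_div_iff₀ (by positivity)]
      nlinarith
    have key : ∀ s : ℝ, |s| < r → s * c < u := by
      intro s hsr
      have hmem : Pi.single ω s ∈ B := by
        simp only [hB, Set.mem_setOf_eq, aux_single_abs]
        exact hsr
      have hfx : f (Pi.single ω s) = s * c := by
        have h1 : (Pi.single ω s : Ω → ℝ) = s • (Pi.single ω 1 : Ω → ℝ) := by
          funext j; simp [Pi.single_apply, mul_ite]
        rw [h1, map_smul, smul_eq_mul, hc]
      have := hfB _ hmem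
      rwa [hfx] at this
    rcases le_or_gt 0 c with h | h
    · have := key t (by rwa [abs_of_pos htpos])
      rw [abs_of_nonneg h] at htc
      linarith
    · have := key (-t) (by rwa [abs_neg, abs_of_pos htpos])
      rw [abs_of_neg h] at htc
      nlinarith
  refine ⟨fun ω => (r / u) * f (Pi.single ω 1), ?_, ?_⟩
  · intro ω
    rw [abs_mul, abs_of_nonneg (by positivity : (0:ℝ) ≤ r / u)]
    rw [div_mul_eq_mul_div, div_le_one hu]
    exact hbound ω
  · intro d hd
    have hrepr : ∑ ω, d ω * ((r / u) * f (Pi.single ω 1)) = (r / u) * f d := by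
      rw [aux_repr f d, Finset.mul_sum]
      apply Finset.sum_congr rfl
      intro ω _
      ring
    rw [hrepr]
    have := hfD d hd
    calc r = (r / u) * u := by field_simp
      _ ≤ (r / u) * f d := mul_le_mul_of_nonneg_left this (by positivity)

open Finset Set

section Aux
variable {Ω : Type*} [Fintype Ω]

lemma aux_pay_nonneg (φ p₀ p₁ : Ω → ℝ) (hφ : ∀ ω, φ ω ∈ Set.Icc (0:ℝ) 1)
    (h₀ : ∀ ω, 0 ≤ p₀ ω) (h₁ : ∀ ω, 0 ≤ p₁ ω) :
    0 ≤ (∑ ω, p₀ ω * (1 - φ ω)) + ∑ ω, p₁ ω * φ ω := by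
  apply add_nonneg <;> apply Finset.sum_nonneg <;> intro ω _
  · exact mul_nonneg (h₀ ω) (by linarith [(hφ ω).2])
  · exact mul_nonneg (h₁ ω) (hφ ω).1

lemma aux_pay_le_two (φ p₀ p₁ : Ω → ℝ) (hφ : ∀ ω, φ ω ∈ Set.Icc (0:ℝ) 1)
    (h₀ : ∀ ω, 0 ≤ p₀ ω) (h₁ : ∀ ω, 0 ≤ p₁ ω)
    (h₀s : ∑ ω, p₀ ω = 1) (h₁s : ∑ ω, p₁ ω = 1) :
    (∑ ω, p₀ ω * (1 - φ ω)) + ∑ ω, p₁ ω * φ ω ≤ 2 := by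
  have e0 : ∑ ω, p₀ ω * (1 - φ ω) ≤ 1 := by
    rw [← h₀s]
    apply Finset.sum_le_sum
    intro ω _
    nlinarith [(hφ ω).1, h₀ ω]
  have e1 : ∑ ω, p₁ ω * φ ω ≤ 1 := by
    rw [← h₁s]
    apply Finset.sum_le_sum
    intro ω _
    nlinarith [(hφ ω).2, h₁ ω]
  linarith
end Aux
/-- minimax identity for composite binary hypothesis testing
over convex compact families of distributions on a finite set. -/
theorem stmt_8 {Ω : Type*} [Fintype Ω]
    (P₀ P₁ : Set (Ω → ℝ))
    (h₀prob : ∀ p ∈ P₀, (∀ ω, 0 ≤ p ω) ∧ ∑ ω, p ω = 1)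
    (h₁prob : ∀ p ∈ P₁, (∀ ω, 0 ≤ p ω) ∧ ∑ ω, p ω = 1)
    (h₀ne : P₀.Nonempty) (h₁ne : P₁.Nonempty)
    (h₀conv : Convex ℝ P₀) (h₁conv : Convex ℝ P₁)
    (h₀cpt : IsCompact P₀) (h₁cpt : IsCompact P₁) :
    (⨅ φ : {φ : Ω → ℝ // ∀ ω, φ ω ∈ Set.Icc (0:ℝ) 1},
        ⨆ p₀ : P₀, ⨆ p₁ : P₁,
          ((∑ ω, (p₀ : Ω → ℝ) ω * (1 - (φ : Ω → ℝ) ω))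
            + ∑ ω, (p₁ : Ω → ℝ) ω * (φ : Ω → ℝ) ω))
      = 1 - ⨅ p₀ : P₀, ⨅ p₁ : P₁,
          (1/2) * ∑ ω, |(p₀ : Ω → ℝ) ω - (p₁ : Ω → ℝ) ω| := by
  classical
  haveI : Nonempty P₀ := h₀ne.to_subtype
  haveI : Nonempty P₁ := h₁ne.to_subtype
  haveI : Nonempty {φ : Ω → ℝ // ∀ ω, φ ω ∈ Set.Icc (0:ℝ) 1} :=
    ⟨⟨fun _ => 0, fun _ => ⟨le_refl _, zero_le_one⟩⟩⟩
  -- minimizer of the TV distance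
  have hcont : Continuous fun z : (Ω → ℝ) × (Ω → ℝ) => ∑ ω, |z.1 ω - z.2 ω| := by
    apply continuous_finset_sum
    intro ω _
    exact (((continuous_apply ω).comp continuous_fst).sub
      ((continuous_apply ω).comp continuous_snd)).abs
  obtain ⟨q, hqmem, hqmin⟩ := (h₀cpt.prod h₁cpt).exists_isMinOn (h₀ne.prod h₁ne)
    hcont.continuousOn
  obtain ⟨hq0, hq1⟩ := Set.mem_prod.1 hqmem
  set r2 : ℝ := ∑ ω, |q.1 ω - q.2 ω| with hr2
  have hmin : ∀ p₀ ∈ P₀, ∀ p₁ ∈ P₁, r2 ≤ ∑ ω, |p₀ ω - p₁ ω| := by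
    intro p₀ h0 p₁ h1
    exact isMinOn_iff.1 hqmin (p₀, p₁) (Set.mem_prod.2 ⟨h0, h1⟩)
  have hr2nonneg : 0 ≤ r2 := Finset.sum_nonneg fun ω _ => abs_nonneg _
  -- inner infimum equals r2/2
  have bdd1 : ∀ p₀ : P₀, BddBelow (Set.range fun p₁ : P₁ =>
      (1/2) * ∑ ω, |(p₀ : Ω → ℝ) ω - (p₁ : Ω → ℝ) ω|) := by
    intro p₀
    refine ⟨0, ?_⟩
    rintro y ⟨p₁, rfl⟩
    positivity
  have bdd0 : BddBelow (Set.range fun p₀ : P₀ => ⨅ p₁ : P₁,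
      (1/2) * ∑ ω, |(p₀ : Ω → ℝ) ω - (p₁ : Ω → ℝ) ω|) := by
    refine ⟨0, ?_⟩
    rintro y ⟨p₀, rfl⟩
    exact le_ciInf fun p₁ => by positivity
  have hinf : (⨅ p₀ : P₀, ⨅ p₁ : P₁,
      (1/2) * ∑ ω, |(p₀ : Ω → ℝ) ω - (p₁ : Ω → ℝ) ω|) = (1/2) * r2 := by
    apply le_antisymm
    · exact ciInf_le_of_le bdd0 ⟨q.1, hq0⟩ (ciInf_le_of_le (bdd1 ⟨q.1, hq0⟩) ⟨q.2, hq1⟩ le_rfl)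
    · apply le_ciInf
      intro p₀
      apply le_ciInf
      intro p₁
      have := hmin _ p₀.2 _ p₁.2
      linarith
  rw [hinf]
  -- boundedness of the sups
  have bddsup1 : ∀ (φ : Ω → ℝ), (∀ ω, φ ω ∈ Set.Icc (0:ℝ) 1) → ∀ p₀ : P₀,
      BddAbove (Set.range fun p₁ : P₁ =>
        (∑ ω, (p₀ : Ω → ℝ) ω * (1 - φ ω)) + ∑ ω, (p₁ : Ω → ℝ) ω * φ ω) := by
    intro φ hφ p₀
    refine ⟨2, ?_⟩
    rintro y ⟨p₁, rfl⟩
    exact aux_pay_le_two φ _ _ hφ (h₀prob _ p₀.2).1 (h₁prob _ p₁.2).1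
      (h₀prob _ p₀.2).2 (h₁prob _ p₁.2).2
  have bddsup0 : ∀ (φ : Ω → ℝ), (∀ ω, φ ω ∈ Set.Icc (0:ℝ) 1) →
      BddAbove (Set.range fun p₀ : P₀ => ⨆ p₁ : P₁,
        (∑ ω, (p₀ : Ω → ℝ) ω * (1 - φ ω)) + ∑ ω, (p₁ : Ω → ℝ) ω * φ ω) := by
    intro φ hφ
    refine ⟨2, ?_⟩
    rintro y ⟨p₀, rfl⟩
    exact ciSup_le fun p₁ => aux_pay_le_two φ _ _ hφ (h₀prob _ p₀.2).1 (h₁prob _ p₁.2).1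
      (h₀prob _ p₀.2).2 (h₁prob _ p₁.2).2
  have hsup_ge : ∀ (φ : Ω → ℝ) (hφ : ∀ ω, φ ω ∈ Set.Icc (0:ℝ) 1),
      (∑ ω, q.1 ω * (1 - φ ω)) + ∑ ω, q.2 ω * φ ω ≤
        ⨆ p₀ : P₀, ⨆ p₁ : P₁,
          (∑ ω, (p₀ : Ω → ℝ) ω * (1 - φ ω)) + ∑ ω, (p₁ : Ω → ℝ) ω * φ ω := by
    intro φ hφ
    refine le_trans ?_ (le_ciSup (bddsup0 φ hφ) (⟨q.1, hq0⟩ : P₀))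
    exact le_ciSup (bddsup1 φ hφ ⟨q.1, hq0⟩) (⟨q.2, hq1⟩ : P₁)
  apply le_antisymm
  · -- hard direction: exhibit a good φ
    obtain ⟨φs, hφs, hbound⟩ : ∃ φ : Ω → ℝ, (∀ ω, φ ω ∈ Set.Icc (0:ℝ) 1) ∧
        ∀ p₀ ∈ P₀, ∀ p₁ ∈ P₁,
          (∑ ω, p₀ ω * (1 - φ ω)) + ∑ ω, p₁ ω * φ ω ≤ 1 - (1/2) * r2 := by
      rcases eq_or_lt_of_le hr2nonneg with heq | hpos
      · refine ⟨fun _ => 1/2, fun _ => ⟨by norm_num, by norm_num⟩, ?_⟩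
        intro p₀ h0 p₁ h1
        rw [aux_payoff_eq _ _ _ (h₀prob _ h0).2]
        have hzero : ∑ ω, (p₁ ω - p₀ ω) * (1/2 : ℝ) = 0 := by
          rw [← Finset.sum_mul, Finset.sum_sub_distrib, (h₁prob _ h1).2, (h₀prob _ h0).2]
          ring
        rw [hzero, ← heq]
        norm_num
      · set D : Set (Ω → ℝ) := (fun z : (Ω → ℝ) × (Ω → ℝ) => z.2 - z.1) '' (P₀ ×ˢ P₁) with hD
        have hDconv : Convex ℝ D := by
          apply (h₀conv.prod h₁conv).is_linear_image
          constructor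
          · intro x y
            funext ω
            simp
            ring
          · intro c x
            funext ω
            simp
            ring
        have hDlb : ∀ d ∈ D, r2 ≤ ∑ ω, |d ω| := by
          rintro d ⟨⟨p₀, p₁⟩, ⟨h0, h1⟩, rfl⟩
          have := hmin p₀ h0 p₁ h1
          have heq2 : ∑ ω, |(p₁ - p₀ : Ω → ℝ) ω| = ∑ ω, |p₀ ω - p₁ ω| := by
            apply Finset.sum_congr rfl
            intro ω _
            simp [abs_sub_comm]
          rw [heq2]
          exact this
        obtain ⟨g, hg1, hg2⟩ := aux_sep D hDconv r2 hpos hDlb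
        refine ⟨fun ω => 1/2 - g ω / 2, ?_, ?_⟩
        · intro ω
          have := abs_le.1 (hg1 ω)
          constructor <;> [skip; skip] <;> simp only [Set.mem_Icc] <;> linarith [this.1, this.2]
        · intro p₀ h0 p₁ h1
          rw [aux_payoff_eq _ _ _ (h₀prob _ h0).2]
          have hd : r2 ≤ ∑ ω, (p₁ ω - p₀ ω) * g ω := by
            have := hg2 (p₁ - p₀) ⟨(p₀, p₁), ⟨h0, h1⟩, rfl⟩
            simpa using this
          have hzero : ∑ ω, (p₁ ω - p₀ ω) = 0 := by
            rw [Finset.sum_sub_distrib, (h₁prob _ h1).2, (h₀prob _ h0).2]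
            ring
          have hsplit : ∑ ω, (p₁ ω - p₀ ω) * (1/2 - g ω / 2) =
              (∑ ω, (p₁ ω - p₀ ω)) * (1/2) - (∑ ω, (p₁ ω - p₀ ω) * g ω) / 2 := by
            rw [Finset.sum_mul, Finset.sum_div, ← Finset.sum_sub_distrib]
            apply Finset.sum_congr rfl
            intro ω _
            ring
          rw [hsplit, hzero]
          linarith
    have hsup : (⨆ p₀ : P₀, ⨆ p₁ : P₁,
        (∑ ω, (p₀ : Ω → ℝ) ω * (1 - φs ω)) + ∑ ω, (p₁ : Ω → ℝ) ω * φs ω) ≤ 1 - (1/2) * r2 :=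
      ciSup_le fun p₀ => ciSup_le fun p₁ => hbound _ p₀.2 _ p₁.2
    have bddinf : BddBelow (Set.range fun φ : {φ : Ω → ℝ // ∀ ω, φ ω ∈ Set.Icc (0:ℝ) 1} =>
        ⨆ p₀ : P₀, ⨆ p₁ : P₁,
          (∑ ω, (p₀ : Ω → ℝ) ω * (1 - (φ : Ω → ℝ) ω)) + ∑ ω, (p₁ : Ω → ℝ) ω * (φ : Ω → ℝ) ω) := by
      refine ⟨0, ?_⟩
      rintro y ⟨φ, rfl⟩
      refine le_trans ?_ (hsup_ge φ φ.2)
      exact aux_pay_nonneg _ _ _ φ.2 (h₀prob _ hq0).1 (h₁prob _ hq1).1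
    exact ciInf_le_of_le bddinf ⟨φs, hφs⟩ hsup
  · -- easy direction
    apply le_ciInf
    rintro ⟨φ, hφ⟩
    refine le_trans ?_ (hsup_ge φ hφ)
    have := aux_lower φ q.1 q.2 hφ (h₀prob _ hq0).2 (h₁prob _ hq1).2
    rw [← hr2] at this
    exact this
end

section
/- Let Ỹ be a finite set of size M, u the uniform distribution on Ỹ, e_ỹ the point mass at ỹ ∈ Ỹ, and a any distribution on Ỹ. Fix 0 ≤ η' ≤ η < 1 and set p̃ = (1−η')e_ỹ + η'u, p = (1−η)e_ỹ + ηu, p̂ = (1−η)a + ηu. Then Σ_{ỹ'} p̃[ỹ'] √(p̂[ỹ']/p[ỹ']) ≤ Σ_{ỹ'} √(p[ỹ'] p̂[ỹ']). -/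
/-!
Write `s i = √(p̂ i / p i)`. Then `√(p i * p̂ i) = p i * s i`, so both sides are `∑ q i * s i` for
`q = (1 - t) e_y + t u`, with `t = η'` on the left and `t = η` on the right. This sum equals
`s y + t (𝔼 s - s y)`, which is nondecreasing in `t` because `s` is minimal at `y`: the noise mass
`η / M` is common to `p` and `p̂`, and `a y ≤ 1` while `0 ≤ a i`.
-/

open Finset
open scoped BigOperators

section RandomizedResponse

variable {M : ℕ}

/-- The distribution `(1 - t) e_y + t u` on `Fin M`. -/
noncomputable def randomizedResponse (y : Fin M) (t : ℝ) (i : Fin M) : ℝ :=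
  (1 - t) * (if i = y then 1 else 0) + t * (1 / M)

theorem randomizedResponse_pos (y i : Fin M) {t : ℝ} (ht0 : 0 < t) (ht1 : t ≤ 1) :
    0 < randomizedResponse y t i := by
  have hM : 0 < (M : ℝ) := by exact_mod_cast y.pos
  have : 0 < t * (1 / M) := by positivity
  unfold randomizedResponse
  split_ifs <;> nlinarith

theorem sum_randomizedResponse_mul (y : Fin M) (t : ℝ) (s : Fin M → ℝ) :
    ∑ i, randomizedResponse y t i * s i = s y + t * (𝔼 i, s i - s y) := by
  simp only [randomizedResponse, add_mul, sum_add_distrib, mul_assoc, ← mul_sum, ite_mul,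
    one_mul, zero_mul, sum_ite_eq', mem_univ, if_true, expect_eq_sum_div_card, card_univ,
    Fintype.card_fin]
  ring

theorem sum_randomizedResponse_mul_mono (y : Fin M) {s : Fin M → ℝ} (hmin : ∀ i, s y ≤ s i)
    {t' t : ℝ} (htt : t' ≤ t) :
    ∑ i, randomizedResponse y t' i * s i ≤ ∑ i, randomizedResponse y t i * s i := by
  have hmean : s y ≤ 𝔼 i, s i := le_expect ⟨y, mem_univ y⟩ fun i _ ↦ hmin i
  rw [sum_randomizedResponse_mul, sum_randomizedResponse_mul]
  nlinarith

end RandomizedResponse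

theorem Real.sqrt_mul_eq_mul_sqrt_div {p q : ℝ} (hp : 0 ≤ p) : √(p * q) = p * √(q / p) := by
  rcases hp.eq_or_lt with rfl | hp
  · simp
  rw [Real.sqrt_div' _ hp.le, Real.sqrt_mul hp.le, ← mul_div_assoc, mul_div_right_comm,
    Real.div_sqrt]

theorem div_le_div_of_le_of_ge {a b c d : ℝ} (hb : 0 < b) (hd : 0 < d) (hab : a ≤ b)
    (hdc : d ≤ c) : a / b ≤ c / d :=
  ((div_le_one hb).2 hab).trans ((one_le_div hd).2 hdc)

theorem stmt_12_general {M : ℕ} (y : Fin M) (a : Fin M → ℝ)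
    (ha0 : ∀ i, 0 ≤ a i) (ha1 : ∑ i, a i = 1)
    (η' η : ℝ) (h1 : η' ≤ η) (h2 : η < 1) (h3 : 0 < η)
    (pt p ph : Fin M → ℝ)
    (hpt : ∀ i, pt i = (1 - η') * (if i = y then 1 else 0) + η' * (1 / M))
    (hp : ∀ i, p i = (1 - η) * (if i = y then 1 else 0) + η * (1 / M))
    (hph : ∀ i, ph i = (1 - η) * a i + η * (1 / M)) :
    ∑ i, pt i * Real.sqrt (ph i / p i) ≤ ∑ i, Real.sqrt (p i * ph i) := by
  obtain rfl : pt = randomizedResponse y η' := funext hpt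
  have hp_eq : randomizedResponse y η = p := (funext hp).symm
  have hp_pos (i : Fin M) : 0 < p i := hp_eq ▸ randomizedResponse_pos y i h3 h2.le
  have hay : a y ≤ 1 := ha1 ▸ single_le_sum (fun i _ ↦ ha0 i) (mem_univ y)
  have hmin (i : Fin M) : √(ph y / p y) ≤ √(ph i / p i) := by
    rcases eq_or_ne i y with rfl | hi
    · rfl
    refine Real.sqrt_le_sqrt (div_le_div_of_le_of_ge (hp_pos y) (hp_pos i) ?_ ?_)
    · simp only [hph, hp, if_pos]
      nlinarith
    · simp only [hph, hp, if_neg hi]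
      nlinarith [ha0 i]
  calc _ ≤ ∑ i, p i * √(ph i / p i) := by
        simpa only [hp_eq] using sum_randomizedResponse_mul_mono y hmin h1
    _ = _ := by simp only [Real.sqrt_mul_eq_mul_sqrt_div (hp_pos _).le]

/-- key likelihood-ratio inequality for the randomized response kernel. -/
theorem stmt_12 {M : ℕ} (y : Fin M) (a : Fin M → ℝ)
    (ha0 : ∀ i, 0 ≤ a i) (ha1 : ∑ i, a i = 1)
    (η' η : ℝ) (h0 : 0 ≤ η') (h1 : η' ≤ η) (h2 : η < 1) (h3 : 0 < η)
    (pt p ph : Fin M → ℝ)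
    (hpt : ∀ i, pt i = (1 - η') * (if i = y then 1 else 0) + η' * (1 / M))
    (hp : ∀ i, p i = (1 - η) * (if i = y then 1 else 0) + η * (1 / M))
    (hph : ∀ i, ph i = (1 - η) * a i + η * (1 / M)) :
    ∑ i, pt i * Real.sqrt (ph i / p i) ≤ ∑ i, Real.sqrt (p i * ph i) :=
  stmt_12_general y a ha0 ha1 η' η h1 h2 h3 pt p ph hpt hp hph
end
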